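/- arXiv:2307.07670 — 2 statements merged into one kernel-verified Lean document; each statement's English description precedes it below -/
import Mathlib

section
/- Let (S, (A_i)_{i=1}^m, H, P, (R_i)_{i=1}^m) be a tabular episodic Markov game satisfying Condition 2 with target policy π† and gap η > 0. Suppose the agents are attacked by the η-gap attack, they deploy Markov product policies π¹,…,π^K over K episodes with initial states s₁¹,…,s₁^K, and every agent i's best-in-hindsight regret in the post-attack game satisfies Reg_i(K,H) ≤ 𝓡(T) with T = KH. Then the η-gap attack forces the agents to follow the target policy with E[Loss1(K,H)] ≤ m·𝓡(T)/η and E[Cost(K,H)] ≤ m²·𝓡(T)/η. -/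
open Finset

namespace MGAttack

variable {S : Type} [Fintype S] [DecidableEq S]
variable {m : ℕ} {A : Fin m → Type} [∀ i, Fintype (A i)] [∀ i, DecidableEq (A i)]

/-- `VA P f π n h s`: expected sum of `f` over `n` steps starting from step `h` in
state `s`, when joint actions are drawn from the joint pmf `π` and states evolve
according to `P`.  With `f` a mean-reward function this is the value function. -/
noncomputable def VA (P : ℕ → S → (∀ i, A i) → S → ℝ) (f : ℕ → S → (∀ i, A i) → ℝ)
    (π : ℕ → S → (∀ i, A i) → ℝ) : ℕ → ℕ → S → ℝ
  | 0, _, _ => 0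
  | n + 1, h, s => ∑ a, π h s a * (f h s a + ∑ s', P h s a s' * VA P f π n (h + 1) s')

/-- Value function `V^π_h(s)` for horizon `H` (steps `h, h+1, …, H`). -/
noncomputable def Vf (P : ℕ → S → (∀ i, A i) → S → ℝ) (R : ℕ → S → (∀ i, A i) → ℝ)
    (π : ℕ → S → (∀ i, A i) → ℝ) (H h : ℕ) (s : S) : ℝ :=
  VA P R π (H + 1 - h) h s

/-- Q-function `Q^π_h(s,a)` for horizon `H`. -/
noncomputable def Qf (P : ℕ → S → (∀ i, A i) → S → ℝ) (R : ℕ → S → (∀ i, A i) → ℝ)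
    (π : ℕ → S → (∀ i, A i) → ℝ) (H h : ℕ) (s : S) (a : ∀ i, A i) : ℝ :=
  R h s a + ∑ s', P h s a s' * VA P R π (H - h) (h + 1) s'

/-- Joint pmf of a Markov product policy. -/
noncomputable def jp (π : ∀ i : Fin m, ℕ → S → A i → ℝ) : ℕ → S → (∀ i, A i) → ℝ :=
  fun h s a => ∏ i, π i h s (a i)

/-- Joint action prescribed by a deterministic (product) policy. -/
def tgtJ (τ : ∀ i : Fin m, ℕ → S → A i) (h : ℕ) (s : S) : ∀ i, A i := fun i => τ i h s

/-- A deterministic policy viewed as a (point-mass) stochastic policy. -/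
noncomputable def detP (τ : ∀ i : Fin m, ℕ → S → A i) : ∀ i : Fin m, ℕ → S → A i → ℝ :=
  fun i h s b => if b = τ i h s then 1 else 0

/-- `P` is a transition kernel for the steps `1, …, H`. -/
def IsKernel (H : ℕ) (P : ℕ → S → (∀ i, A i) → S → ℝ) : Prop :=
  ∀ h ∈ Finset.Icc 1 H, ∀ s a, (∀ s', 0 ≤ P h s a s') ∧ ∑ s', P h s a s' = 1

/-- `π` is a Markov product policy for the steps `1, …, H`. -/
def IsPolicy (H : ℕ) (π : ∀ i : Fin m, ℕ → S → A i → ℝ) : Prop :=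
  ∀ i : Fin m, ∀ h ∈ Finset.Icc 1 H, ∀ s, (∀ b, 0 ≤ π i h s b) ∧ ∑ b, π i h s b = 1

/-- `πi` is a Markov policy for the single agent `i`. -/
def IsPolicyI (H : ℕ) {i : Fin m} (πi : ℕ → S → A i → ℝ) : Prop :=
  ∀ h ∈ Finset.Icc 1 H, ∀ s, (∀ b, 0 ≤ πi h s b) ∧ ∑ b, πi h s b = 1

/-- The mean rewards all lie in `[0,1]`. -/
def IsReward (H : ℕ) (R : Fin m → ℕ → S → (∀ i, A i) → ℝ) : Prop :=
  ∀ i, ∀ h ∈ Finset.Icc 1 H, ∀ s a, R i h s a ∈ Set.Icc (0 : ℝ) 1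

/-- `d_h(s,a) = m/2 + (1/2) ∑_i 1(a_i = π†_{i,h}(s))` of the `d`-portion attack. -/
noncomputable def dfun (τ : ∀ i : Fin m, ℕ → S → A i) (h : ℕ) (s : S) (a : ∀ i, A i) : ℝ :=
  (m : ℝ) / 2 + (∑ i, if a i = τ i h s then (1 : ℝ) else 0) / 2

/-- Post-attack mean rewards of the `d`-portion attack (target `τ`, worse policy `τ'`). -/
noncomputable def Rport (R : Fin m → ℕ → S → (∀ i, A i) → ℝ) (τ τ' : ∀ i : Fin m, ℕ → S → A i)
    (i : Fin m) : ℕ → S → (∀ i, A i) → ℝ :=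
  fun h s a => (dfun τ h s a / m) * R i h s (tgtJ τ h s)
    + (1 - dfun τ h s a / m) * R i h s (tgtJ τ' h s)

/-- Post-attack transition probabilities of the `d`-portion attack. -/
noncomputable def Pport (P : ℕ → S → (∀ i, A i) → S → ℝ) (τ τ' : ∀ i : Fin m, ℕ → S → A i) :
    ℕ → S → (∀ i, A i) → S → ℝ :=
  fun h s a s' => (dfun τ h s a / m) * P h s (tgtJ τ h s) s'
    + (1 - dfun τ h s a / m) * P h s (tgtJ τ' h s) s'

/-- `Δ^{†−}_{i,h}(s) = Q^{π†}_{i,h}(s, π†_h(s)) − Q^{π†}_{i,h}(s, π⁻_h(s))` (original game). -/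
noncomputable def Δdag (P : ℕ → S → (∀ i, A i) → S → ℝ) (R : Fin m → ℕ → S → (∀ i, A i) → ℝ)
    (τ τ' : ∀ i : Fin m, ℕ → S → A i) (H : ℕ) (i : Fin m) (h : ℕ) (s : S) : ℝ :=
  Qf P (R i) (jp (detP τ)) H h s (tgtJ τ h s) - Qf P (R i) (jp (detP τ)) H h s (tgtJ τ' h s)

/-- Post-attack mean rewards of the `η`-gap attack; `ΔR i` is the reward spread of agent `i`. -/
noncomputable def Rgap (R : Fin m → ℕ → S → (∀ i, A i) → ℝ) (τ : ∀ i : Fin m, ℕ → S → A i)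
    (η : ℝ) (ΔR : Fin m → ℝ) (H : ℕ) (i : Fin m) : ℕ → S → (∀ i, A i) → ℝ :=
  fun h s a =>
    if a = tgtJ τ h s then R i h s a
    else R i h s (tgtJ τ h s) - (η + ((H - h : ℕ) : ℝ) * ΔR i) * (if a i = τ i h s then 0 else 1)

/-- Post-attack mean rewards of the mixed attack. -/
noncomputable def Rmix (R : Fin m → ℕ → S → (∀ i, A i) → ℝ) (τ : ∀ i : Fin m, ℕ → S → A i)
    (i : Fin m) : ℕ → S → (∀ i, A i) → ℝ :=
  fun h s a => (if a i = τ i h s then (1 : ℝ) else 0) * R i h s (tgtJ τ h s)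

/-- Post-attack transition probabilities of the mixed attack. -/
def Pmix (P : ℕ → S → (∀ i, A i) → S → ℝ) (τ : ∀ i : Fin m, ℕ → S → A i) :
    ℕ → S → (∀ i, A i) → S → ℝ :=
  fun h s a s' => P h s (tgtJ τ h s) s'

/-- Probability of being in state `s'` after `n` steps, starting from `(h, s)` and following
the deterministic policy `τ` under the transitions `P`. -/
noncomputable def reach (P : ℕ → S → (∀ i, A i) → S → ℝ) (τ : ∀ i : Fin m, ℕ → S → A i) :
    ℕ → ℕ → S → S → ℝ
  | 0, _, s, s' => if s' = s then 1 else 0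
  | n + 1, h, s, s' => ∑ t, P h s (tgtJ τ h s) t * reach P τ n (h + 1) t s'

/-- Expected sum of a state-dependent function along the Markov chain `Ps`. -/
noncomputable def SSum (Ps : ℕ → S → S → ℝ) (f : ℕ → S → ℝ) : ℕ → ℕ → S → ℝ
  | 0, _, _ => 0
  | n + 1, h, s => f h s + ∑ s', Ps h s s' * SSum Ps f n (h + 1) s'

end MGAttack

namespace MGAttack

/-!
If agent `i` alone switches to `π†_i`, it gains at least `η` of post-attack value for every
step at which it used to deviate. At such a step the attack pays it
`R(π†) - η - (H - h) Δ_R`, and afterwards it collects at most `(H - h) max R`; playing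
`π†_i` instead earns `R(π†)` now and at least `(H - h) min R` afterwards, because every
action with `a_i = π†_i` is paid `R(π†)`. So `η` times agent `i`'s expected number of
deviations is at most its regret against this switched policy, hence at most `𝓡(T)`;
summing over agents bounds the loss. Every agent's cost at a step is at most `1` and vanishes
unless some agent deviates, so the cost is at most `m` times the loss.
-/

variable {S : Type} {m : ℕ} {A : Fin m → Type}

def IsJointPolicy [∀ i, Fintype (A i)] (H : ℕ) (q : ℕ → S → (∀ i, A i) → ℝ) : Prop :=
  ∀ h ∈ Icc 1 H, ∀ s, (∀ a, 0 ≤ q h s a) ∧ ∑ a, q h s a = 1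

section ValueLinearity

variable [Fintype S] [∀ i, Fintype (A i)]

variable (P : ℕ → S → (∀ i, A i) → S → ℝ) (q : ℕ → S → (∀ i, A i) → ℝ)

theorem VA_add (f g : ℕ → S → (∀ i, A i) → ℝ) (n h : ℕ) (s : S) :
    VA P (fun h s a => f h s a + g h s a) q n h s = VA P f q n h s + VA P g q n h s := by
  induction n generalizing h s with
  | zero => simp [VA]
  | succ n ih =>
    simp only [VA, ih, mul_add, sum_add_distrib]
    ring

theorem VA_const_mul (c : ℝ) (f : ℕ → S → (∀ i, A i) → ℝ) (n h : ℕ) (s : S) :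
    VA P (fun h s a => c * f h s a) q n h s = c * VA P f q n h s := by
  induction n generalizing h s with
  | zero => simp [VA]
  | succ n ih =>
    simp only [VA, ih, mul_sum, mul_add, mul_left_comm c]

theorem VA_sum {ι : Type*} (t : Finset ι) (f : ι → ℕ → S → (∀ i, A i) → ℝ) (n h : ℕ) (s : S) :
    VA P (fun h s a => ∑ j ∈ t, f j h s a) q n h s = ∑ j ∈ t, VA P (f j) q n h s := by
  induction n generalizing h s with
  | zero => simp [VA]
  | succ n ih =>
    simp only [VA, ih, mul_sum, mul_add, sum_add_distrib]
    congr 1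
    · exact sum_comm
    · exact (sum_congr rfl fun _ _ => sum_comm).trans sum_comm

end ValueLinearity

section ValueBounds

variable {P : ℕ → S → (∀ i, A i) → S → ℝ} {H : ℕ}

theorem IsKernel.sum_mul_le [Fintype S] (hP : IsKernel H P) {h : ℕ} (hh : h ∈ Icc 1 H) (s : S)
    (a : ∀ i, A i) {V : S → ℝ} {B : ℝ} (hV : ∀ s', V s' ≤ B) :
    ∑ s', P h s a s' * V s' ≤ B :=
  calc ∑ s', P h s a s' * V s' ≤ ∑ s', P h s a s' * B :=
        sum_le_sum fun s' _ => mul_le_mul_of_nonneg_left (hV s') ((hP h hh s a).1 s')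
    _ = B := by rw [← sum_mul, (hP h hh s a).2, one_mul]

theorem IsKernel.le_sum_mul [Fintype S] (hP : IsKernel H P) {h : ℕ} (hh : h ∈ Icc 1 H) (s : S)
    (a : ∀ i, A i) {V : S → ℝ} {B : ℝ} (hV : ∀ s', B ≤ V s') :
    B ≤ ∑ s', P h s a s' * V s' :=
  calc B = ∑ s', P h s a s' * B := by rw [← sum_mul, (hP h hh s a).2, one_mul]
    _ ≤ ∑ s', P h s a s' * V s' :=
        sum_le_sum fun s' _ => mul_le_mul_of_nonneg_left (hV s') ((hP h hh s a).1 s')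

variable [Fintype S] [∀ i, Fintype (A i)] {q : ℕ → S → (∀ i, A i) → ℝ}

theorem VA_mono (hP : IsKernel H P) (hq : ∀ h ∈ Icc 1 H, ∀ s a, 0 ≤ q h s a)
    {f g : ℕ → S → (∀ i, A i) → ℝ}
    (hfg : ∀ h ∈ Icc 1 H, ∀ s a, q h s a ≠ 0 → f h s a ≤ g h s a)
    {n h : ℕ} (h1 : 1 ≤ h) (hn : h + n ≤ H + 1) (s : S) :
    VA P f q n h s ≤ VA P g q n h s := by
  induction n generalizing h s with
  | zero => exact le_rfl
  | succ n ih =>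
    have hh : h ∈ Icc 1 H := mem_Icc.2 ⟨h1, by omega⟩
    refine sum_le_sum fun a _ => ?_
    rcases eq_or_ne (q h s a) 0 with h0 | h0
    · simp [h0]
    refine mul_le_mul_of_nonneg_left (add_le_add (hfg h hh s a h0) ?_) (hq h hh s a)
    exact sum_le_sum fun s' _ =>
      mul_le_mul_of_nonneg_left (ih (by omega) (by omega) s') ((hP h hh s a).1 s')

theorem VA_const (hP : IsKernel H P) (hq : IsJointPolicy H q) (B : ℝ)
    {n h : ℕ} (h1 : 1 ≤ h) (hn : h + n ≤ H + 1) (s : S) :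
    VA P (fun _ _ _ => B) q n h s = n * B := by
  induction n generalizing h s with
  | zero => simp [VA]
  | succ n ih =>
    have hh : h ∈ Icc 1 H := mem_Icc.2 ⟨h1, by omega⟩
    have hnext : ∀ a, ∑ s', P h s a s' * VA P (fun _ _ _ => B) q n (h + 1) s' = n * B :=
      fun a => by
        simp only [ih (h := h + 1) (by omega) (by omega), ← sum_mul, (hP h hh s a).2, one_mul]
    simp only [VA, hnext, ← sum_mul, (hq h hh s).2]
    push_cast
    ring

theorem VA_le_mul (hP : IsKernel H P) (hq : IsJointPolicy H q)
    {f : ℕ → S → (∀ i, A i) → ℝ} {B : ℝ} (hf : ∀ h ∈ Icc 1 H, ∀ s a, q h s a ≠ 0 → f h s a ≤ B)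
    {n h : ℕ} (h1 : 1 ≤ h) (hn : h + n ≤ H + 1) (s : S) :
    VA P f q n h s ≤ n * B :=
  (VA_mono hP (fun h hh s a => (hq h hh s).1 a) hf h1 hn s).trans_eq (VA_const hP hq B h1 hn s)

theorem mul_le_VA (hP : IsKernel H P) (hq : IsJointPolicy H q)
    {f : ℕ → S → (∀ i, A i) → ℝ} {B : ℝ} (hf : ∀ h ∈ Icc 1 H, ∀ s a, q h s a ≠ 0 → B ≤ f h s a)
    {n h : ℕ} (h1 : 1 ≤ h) (hn : h + n ≤ H + 1) (s : S) :
    n * B ≤ VA P f q n h s :=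
  (VA_const hP hq B h1 hn s).symm.trans_le
    (VA_mono hP (fun h hh s a => (hq h hh s).1 a) hf h1 hn s)

end ValueBounds

section Policies

variable {H : ℕ}

theorem IsPolicy.isJointPolicy_jp [∀ i, Fintype (A i)] {π : ∀ i : Fin m, ℕ → S → A i → ℝ}
    (hπ : IsPolicy H π) : IsJointPolicy H (jp π) := fun h hh s =>
  ⟨fun a => prod_nonneg fun j _ => (hπ j h hh s).1 (a j),
    by simp only [jp, ← Fintype.prod_sum, (hπ _ h hh s).2, prod_const_one]⟩

theorem isPolicyI_detP [∀ i, Fintype (A i)] [∀ i, DecidableEq (A i)]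
    (τ : ∀ i : Fin m, ℕ → S → A i) (i : Fin m) : IsPolicyI H (detP τ i) :=
  fun _ _ _ => ⟨fun _ => by unfold detP; split_ifs <;> norm_num, by simp [detP]⟩

theorem IsPolicy.update [∀ i, Fintype (A i)] {π : ∀ i : Fin m, ℕ → S → A i → ℝ}
    (hπ : IsPolicy H π) {i : Fin m} {πi : ℕ → S → A i → ℝ} (hπi : IsPolicyI H πi) :
    IsPolicy H (Function.update π i πi) := by
  intro j
  rcases eq_or_ne j i with rfl | hj
  · intro h hh s
    simpa using hπi h hh s
  · simpa [Function.update_of_ne hj] using hπ j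

theorem jp_update_detP_of_ne [∀ i, DecidableEq (A i)] (π : ∀ i : Fin m, ℕ → S → A i → ℝ)
    (τ : ∀ i : Fin m, ℕ → S → A i) {i : Fin m} {h : ℕ} {s : S} {a : ∀ j, A j}
    (hai : a i ≠ τ i h s) :
    jp (Function.update π i (detP τ i)) h s a = 0 :=
  prod_eq_zero (mem_univ i) (by simp [detP, hai])

theorem jp_update_mul (π : ∀ i : Fin m, ℕ → S → A i → ℝ) (i : Fin m) (δ : ℕ → S → A i → ℝ)
    (h : ℕ) (s : S) (a : ∀ j, A j) (b : A i) :
    jp π h s (Function.update a i b) * δ h s (a i)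
      = π i h s b * jp (Function.update π i δ) h s a := by
  simp only [jp, ← mul_prod_erase univ _ (mem_univ i), Function.update_self]
  rw [prod_congr rfl fun j hj => by
    rw [Function.update_of_ne (ne_of_mem_erase hj),
      ← Function.update_of_ne (ne_of_mem_erase hj) δ π]]
  ring

/-- Playing `δ` instead of `π i` is the same as first sampling from `π` and then letting
agent `i` resample its action from `δ`; the proof is the change of variables
`(a, b) ↦ (update a i b, a i)`, an involution. -/
theorem sum_jp_update_mul [∀ i, Fintype (A i)] (π : ∀ i : Fin m, ℕ → S → A i → ℝ) (i : Fin m)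
    (δ : ℕ → S → A i → ℝ) {h : ℕ} {s : S} (hπi : ∑ b, π i h s b = 1) (G : (∀ j, A j) → ℝ) :
    ∑ a, jp (Function.update π i δ) h s a * G a
      = ∑ a, jp π h s a * ∑ b, δ h s b * G (Function.update a i b) := by
  have hinv : Function.Involutive
      fun p : (∀ j, A j) × A i => (Function.update p.1 i p.2, p.1 i) := fun p => by simp
  calc ∑ a, jp (Function.update π i δ) h s a * G a
      = ∑ p : (∀ j, A j) × A i, π i h s p.2 * jp (Function.update π i δ) h s p.1 * G p.1 := by
        simp only [Fintype.sum_prod_type, ← sum_mul, hπi, one_mul]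
    _ = ∑ p : (∀ j, A j) × A i,
          jp π h s (Function.update p.1 i p.2) * δ h s (p.1 i) * G p.1 := by
        simp only [jp_update_mul]
    _ = ∑ p : (∀ j, A j) × A i, jp π h s p.1 * δ h s p.2 * G (Function.update p.1 i p.2) :=
        (Equiv.sum_comp hinv.toPerm _).symm.trans (by simp)
    _ = _ := by simp only [Fintype.sum_prod_type, mul_sum, mul_assoc]

end Policies

section GapAttack

variable [∀ i, DecidableEq (A i)] {R : Fin m → ℕ → S → (∀ i, A i) → ℝ}
  {τ : ∀ i : Fin m, ℕ → S → A i} {η : ℝ} {ΔR : Fin m → ℝ} {H : ℕ} {i : Fin m}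

theorem Rgap_of_eq {h : ℕ} {s : S} {a : ∀ j, A j} (hai : a i = τ i h s) :
    Rgap R τ η ΔR H i h s a = R i h s (tgtJ τ h s) := by
  unfold Rgap
  split_ifs with ha
  · rw [ha]
  · simp

theorem Rgap_of_ne {h : ℕ} {s : S} {a : ∀ j, A j} (hai : a i ≠ τ i h s) :
    Rgap R τ η ΔR H i h s a = R i h s (tgtJ τ h s) - (η + ((H - h : ℕ) : ℝ) * ΔR i) := by
  have ha : a ≠ tgtJ τ h s := fun ha => hai (congrFun ha i)
  simp [Rgap, ha, hai]

variable [Fintype S] [∀ i, Fintype (A i)] {P : ℕ → S → (∀ i, A i) → S → ℝ}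

theorem VA_Rgap_add_mul_VA_offTarget_le (hP : IsKernel H P) {π : ∀ j : Fin m, ℕ → S → A j → ℝ}
    (hπ : IsPolicy H π) {lo hi : ℝ} (hlo : ∀ h ∈ Icc 1 H, ∀ s, lo ≤ R i h s (tgtJ τ h s))
    (hhi : ∀ h ∈ Icc 1 H, ∀ s, R i h s (tgtJ τ h s) ≤ hi) (hΔ : hi - lo ≤ ΔR i)
    {n h : ℕ} (h1 : 1 ≤ h) (hn : h + n ≤ H + 1) (s : S) :
    VA P (Rgap R τ η ΔR H i) (jp π) n h s
        + η * VA P (fun h s a => if a i = τ i h s then 0 else 1) (jp π) n h s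
      ≤ VA P (Rgap R τ η ΔR H i) (jp (Function.update π i (detP τ i))) n h s := by
  have hq := hπ.isJointPolicy_jp
  have hq' := (hπ.update (isPolicyI_detP τ i)).isJointPolicy_jp
  have hΔ0 : ∀ h ∈ Icc 1 H, 0 ≤ ΔR i := fun h hh => by linarith [hlo h hh s, hhi h hh s]
  have hle_hi : ∀ h ∈ Icc 1 H, ∀ s (a : ∀ j, A j), jp π h s a ≠ 0 →
      Rgap R τ η ΔR H i h s a + η * (if a i = τ i h s then 0 else 1) ≤ hi := by
    intro h hh s a _
    by_cases hai : a i = τ i h s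
    · simpa [Rgap_of_eq hai, hai] using hhi h hh s
    · rw [Rgap_of_ne hai, if_neg hai]
      nlinarith [hhi h hh s, mul_nonneg (Nat.cast_nonneg (H - h)) (hΔ0 h hh)]
  have hlo_le : ∀ h ∈ Icc 1 H, ∀ s (a : ∀ j, A j),
      jp (Function.update π i (detP τ i)) h s a ≠ 0 → lo ≤ Rgap R τ η ΔR H i h s a := by
    intro h hh s a ha
    rw [Rgap_of_eq (not_imp_comm.1 (jp_update_detP_of_ne π τ) ha)]
    exact hlo h hh s
  rw [← VA_const_mul, ← VA_add]
  induction n generalizing h s with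
  | zero => exact le_rfl
  | succ n ih =>
    have hh : h ∈ Icc 1 H := mem_Icc.2 ⟨h1, by omega⟩
    rw [VA, VA, sum_jp_update_mul π i (detP τ i) (hπ i h hh s).2]
    refine sum_le_sum fun a _ => mul_le_mul_of_nonneg_left ?_ ((hq h hh s).1 a)
    simp only [detP, ite_mul, one_mul, zero_mul, sum_ite_eq', mem_univ, if_true]
    by_cases hai : a i = τ i h s
    · rw [← hai, Function.update_eq_self, if_pos rfl, mul_zero, add_zero]
      gcongr with s'
      · exact (hP h hh s a).1 s'
      · exact ih (by omega) (by omega) s'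
    · have hfut := hP.sum_mul_le hh s a fun s' =>
        VA_le_mul hP hq hle_hi (n := n) (h := h + 1) (by omega) (by omega) s'
      have hfut' := hP.le_sum_mul hh s (Function.update a i (τ i h s)) fun s' =>
        mul_le_VA hP hq' hlo_le (n := n) (h := h + 1) (by omega) (by omega) s'
      have hnH : (n : ℝ) ≤ (H - h : ℕ) := by exact_mod_cast (by omega : n ≤ H - h)
      rw [Rgap_of_ne hai, if_neg hai, Rgap_of_eq (Function.update_self i _ a)]
      linarith [mul_le_mul_of_nonneg_right hnH (hΔ0 h hh),
        mul_le_mul_of_nonneg_left hΔ (Nat.cast_nonneg (α := ℝ) n)]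

theorem mul_VA_offTarget_le_Vf_sub (hP : IsKernel H P) {π : ∀ j : Fin m, ℕ → S → A j → ℝ}
    (hπ : IsPolicy H π) {lo hi : ℝ} (hlo : ∀ h ∈ Icc 1 H, ∀ s, lo ≤ R i h s (tgtJ τ h s))
    (hhi : ∀ h ∈ Icc 1 H, ∀ s, R i h s (tgtJ τ h s) ≤ hi) (hΔ : hi - lo ≤ ΔR i) (s : S) :
    η * VA P (fun h s a => if a i = τ i h s then 0 else 1) (jp π) H 1 s
      ≤ Vf P (Rgap R τ η ΔR H i) (jp (Function.update π i (detP τ i))) H 1 s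
        - Vf P (Rgap R τ η ΔR H i) (jp π) H 1 s := by
  have := VA_Rgap_add_mul_VA_offTarget_le hP hπ hlo hhi hΔ (η := η) (n := H) le_rfl (by omega) s
  simp only [Vf, Nat.add_sub_cancel]
  linarith

end GapAttack

theorem sum_le_mul_sum_offTarget [∀ i, DecidableEq (A i)] {c : Fin m → ℝ} {a τ : ∀ j, A j}
    (hc : ∀ i, c i ≤ if a = τ then 0 else 1) :
    ∑ i, c i ≤ m * ∑ j, if a j = τ j then (0 : ℝ) else 1 := by
  have hoff : (if a = τ then 0 else 1 : ℝ) ≤ ∑ j, if a j = τ j then (0 : ℝ) else 1 := by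
    have hnonneg : ∀ j ∈ univ, (0 : ℝ) ≤ if a j = τ j then 0 else 1 := fun j _ => by
      split_ifs <;> norm_num
    split_ifs with ha
    · exact sum_nonneg hnonneg
    · obtain ⟨j, hj⟩ := Function.ne_iff.1 ha
      simpa [hj] using single_le_sum hnonneg (mem_univ j)
  calc ∑ i, c i ≤ ∑ _i : Fin m, (if a = τ then 0 else 1 : ℝ) := sum_le_sum fun i _ => hc i
    _ = m * (if a = τ then 0 else 1 : ℝ) := by simp
    _ ≤ m * ∑ j, if a j = τ j then (0 : ℝ) else 1 := by gcongr

theorem VA_sum_le_mul_VA_offTarget [Fintype S] [∀ i, Fintype (A i)] [∀ i, DecidableEq (A i)]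
    {H : ℕ} {P : ℕ → S → (∀ i, A i) → S → ℝ} (hP : IsKernel H P)
    {π : ∀ j : Fin m, ℕ → S → A j → ℝ} (hπ : IsPolicy H π) {τ : ∀ i : Fin m, ℕ → S → A i}
    {c : Fin m → ℕ → S → (∀ j, A j) → ℝ}
    (hc : ∀ i, ∀ h ∈ Icc 1 H, ∀ s a, c i h s a ≤ if a = tgtJ τ h s then 0 else 1)
    {n h : ℕ} (h1 : 1 ≤ h) (hn : h + n ≤ H + 1) (s : S) :
    VA P (fun h s a => ∑ i, c i h s a) (jp π) n h s
      ≤ m * VA P (fun h s a => ∑ j, if a j = τ j h s then 0 else 1) (jp π) n h s :=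
  (VA_mono hP (fun h hh s a => (hπ.isJointPolicy_jp h hh s).1 a)
    (fun h hh s a _ => sum_le_mul_sum_offTarget fun i => hc i h hh s a) h1 hn s).trans_eq
    (VA_const_mul _ _ _ _ _ _ _)

theorem stmt12_general {S : Type} [Fintype S]
    {m : ℕ} {A : Fin m → Type} [∀ i, Fintype (A i)] [∀ i, DecidableEq (A i)]
    (H : ℕ)
    (P : ℕ → S → (∀ i, A i) → S → ℝ) (hP : IsKernel H P)
    (R : Fin m → ℕ → S → (∀ i, A i) → ℝ)
    (τ : ∀ i : Fin m, ℕ → S → A i) (η : ℝ) (hη : 0 < η)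
    (Rmax Rmin : Fin m → ℝ)
    (hmax : ∀ i : Fin m, IsGreatest
      {x : ℝ | ∃ h ∈ Finset.Icc 1 H, ∃ s : S, ∃ a : ∀ j, A j, x = R i h s a} (Rmax i))
    (hmin : ∀ i : Fin m, IsLeast
      {x : ℝ | ∃ h ∈ Finset.Icc 1 H, ∃ s : S, ∃ a : ∀ j, A j, x = R i h s a} (Rmin i))
    -- the K episodes
    (K : ℕ) (πk : Fin K → ∀ j : Fin m, ℕ → S → A j → ℝ) (hπk : ∀ k, IsPolicy H (πk k))
    (s₁ : Fin K → S) (𝓡 : ℕ → ℝ)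
    -- sub-linear best-in-hindsight regret bound in the post-attack game
    (hreg : ∀ i : Fin m, ∀ πi' : ℕ → S → A i → ℝ, IsPolicyI H πi' →
      ∑ k : Fin K,
          (Vf P (Rgap R τ η (fun j => Rmax j - Rmin j) H i)
              (jp (Function.update (πk k) i πi')) H 1 (s₁ k)
            - Vf P (Rgap R τ η (fun j => Rmax j - Rmin j) H i) (jp (πk k)) H 1 (s₁ k))
        ≤ 𝓡 (K * H))
    -- per-agent per-step expected reward-manipulation cost of the η-gap attack
    (c : Fin m → ℕ → S → (∀ j, A j) → ℝ)
    (hc : ∀ i : Fin m, ∀ h ∈ Finset.Icc 1 H, ∀ s : S, ∀ a : ∀ j, A j,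
      0 ≤ c i h s a ∧ c i h s a ≤ (if a = tgtJ τ h s then 0 else 1)) :
    -- expected attack loss (Loss1) bound
    (∑ k : Fin K, VA P
        (fun h s a => ∑ j : Fin m, (if a j = τ j h s then (0 : ℝ) else 1))
        (jp (πk k)) H 1 (s₁ k)
      ≤ m * 𝓡 (K * H) / η)
    -- expected attack cost bound
    ∧ (∑ k : Fin K, VA P (fun h s a => ∑ i : Fin m, c i h s a) (jp (πk k)) H 1 (s₁ k)
      ≤ (m : ℝ) ^ 2 * 𝓡 (K * H) / η) := by
  have hagent : ∀ i, ∑ k, VA P (fun h s a => if a i = τ i h s then 0 else 1) (jp (πk k)) H 1 (s₁ k)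
      ≤ 𝓡 (K * H) / η := fun i => by
    rw [le_div_iff₀ hη, sum_mul]
    refine (sum_le_sum fun k _ => ?_).trans (hreg i _ (isPolicyI_detP τ i))
    rw [mul_comm]
    exact mul_VA_offTarget_le_Vf_sub hP (hπk k) (fun h hh s => (hmin i).2 ⟨h, hh, s, _, rfl⟩)
      (fun h hh s => (hmax i).2 ⟨h, hh, s, _, rfl⟩) le_rfl (s₁ k)
  have hloss : ∑ k : Fin K, VA P
      (fun h s a => ∑ j : Fin m, (if a j = τ j h s then (0 : ℝ) else 1)) (jp (πk k)) H 1 (s₁ k)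
      ≤ m * 𝓡 (K * H) / η :=
    calc _ = ∑ j : Fin m, ∑ k : Fin K,
          VA P (fun h s a => if a j = τ j h s then 0 else 1) (jp (πk k)) H 1 (s₁ k) := by
          simp only [VA_sum]
          exact sum_comm
      _ ≤ ∑ _j : Fin m, 𝓡 (K * H) / η := sum_le_sum fun j _ => hagent j
      _ = _ := by simp [mul_div_assoc]
  refine ⟨hloss, (sum_le_sum fun k _ => VA_sum_le_mul_VA_offTarget hP (hπk k)
    (fun i h hh s a => (hc i h hh s a).2) le_rfl (by omega) (s₁ k)).trans ?_⟩
  rw [← mul_sum, show (m : ℝ) ^ 2 * 𝓡 (K * H) / η = m * (m * 𝓡 (K * H) / η) by ring]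
  gcongr

/-- Theorem 6 (η-gap attack): under Condition 2, if every agent's best-in-hindsight regret
in the post-attack game is at most `𝓡(T)` with `T = KH`, then the expected attack loss is
at most `m𝓡(T)/η` and the expected attack cost is at most `m²𝓡(T)/η`.  Here
`c i h s a` is the (conditional expected) per-step reward-manipulation cost of the η-gap
attack, which vanishes on the target joint action and is at most `1` otherwise. -/
theorem stmt12 {S : Type} [Fintype S] [DecidableEq S]
    {m : ℕ} {A : Fin m → Type} [∀ i, Fintype (A i)] [∀ i, DecidableEq (A i)]
    (H : ℕ) (hH : 1 ≤ H) (hm : 1 ≤ m)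
    (P : ℕ → S → (∀ i, A i) → S → ℝ) (hP : IsKernel H P)
    (R : Fin m → ℕ → S → (∀ i, A i) → ℝ) (hR : IsReward H R)
    (τ : ∀ i : Fin m, ℕ → S → A i) (η : ℝ) (hη : 0 < η)
    (Rmax Rmin : Fin m → ℝ)
    (hmax : ∀ i : Fin m, IsGreatest
      {x : ℝ | ∃ h ∈ Finset.Icc 1 H, ∃ s : S, ∃ a : ∀ j, A j, x = R i h s a} (Rmax i))
    (hmin : ∀ i : Fin m, IsLeast
      {x : ℝ | ∃ h ∈ Finset.Icc 1 H, ∃ s : S, ∃ a : ∀ j, A j, x = R i h s a} (Rmin i))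
    -- Condition 2
    (hcond2 : ∀ i : Fin m, ∀ h ∈ Finset.Icc 1 H, ∀ s : S,
      ((H - h : ℕ) : ℝ) * (Rmax i - Rmin i) ≤ R i h s (tgtJ τ h s) - η)
    -- the K episodes
    (K : ℕ) (πk : Fin K → ∀ j : Fin m, ℕ → S → A j → ℝ) (hπk : ∀ k, IsPolicy H (πk k))
    (s₁ : Fin K → S) (𝓡 : ℕ → ℝ)
    -- sub-linear best-in-hindsight regret bound in the post-attack game
    (hreg : ∀ i : Fin m, ∀ πi' : ℕ → S → A i → ℝ, IsPolicyI H πi' →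
      ∑ k : Fin K,
          (Vf P (Rgap R τ η (fun j => Rmax j - Rmin j) H i)
              (jp (Function.update (πk k) i πi')) H 1 (s₁ k)
            - Vf P (Rgap R τ η (fun j => Rmax j - Rmin j) H i) (jp (πk k)) H 1 (s₁ k))
        ≤ 𝓡 (K * H))
    -- per-agent per-step expected reward-manipulation cost of the η-gap attack
    (c : Fin m → ℕ → S → (∀ j, A j) → ℝ)
    (hc : ∀ i : Fin m, ∀ h ∈ Finset.Icc 1 H, ∀ s : S, ∀ a : ∀ j, A j,
      0 ≤ c i h s a ∧ c i h s a ≤ (if a = tgtJ τ h s then 0 else 1)) :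
    -- expected attack loss (Loss1) bound
    (∑ k : Fin K, VA P
        (fun h s a => ∑ j : Fin m, (if a j = τ j h s then (0 : ℝ) else 1))
        (jp (πk k)) H 1 (s₁ k)
      ≤ m * 𝓡 (K * H) / η)
    -- expected attack cost bound
    ∧ (∑ k : Fin K, VA P (fun h s a => ∑ i : Fin m, c i h s a) (jp (πk k)) H 1 (s₁ k)
      ≤ (m : ℝ) ^ 2 * 𝓡 (K * H) / η) :=
  stmt12_general H P hP R τ η hη Rmax Rmin hmax hmin K πk hπk s₁ 𝓡 hreg c hc

end MGAttack
end

section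
/- Let (S, (A_i)_{i=1}^m, H, P, (R_i)_{i=1}^m) be a tabular episodic Markov game and π† a deterministic target policy with R_{i,h}(s, π†_h(s)) > 0 for all i, h, s. Under the mixed attack: (i) for every agent i and every Markov product policy π_{-i} of the other agents, π†_i is a best response of agent i toward π_{-i} in the post-attack game, i.e., Ṽ^{π†_i × π_{-i}}_{i,1}(s) = Ṽ^{†,π_{-i}}_{i,1}(s) for every state s; (ii) π† is a Nash equilibrium of the post-attack game; and (iii) if every state s ∈ S is reachable (visited with positive probability) at every step h ∈ {1,…,H} under π†, then π† is the unique Nash equilibrium of the post-attack game. -/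
open Finset

namespace MGAttack
section Helpers

variable {S : Type} [Fintype S] [DecidableEq S]
variable {m : ℕ} {A : Fin m → Type} [∀ i, Fintype (A i)] [∀ i, DecidableEq (A i)]

lemma prob_le_one {α : Type*} [Fintype α] (p : α → ℝ) (h0 : ∀ b, 0 ≤ p b)
    (h1 : ∑ b, p b = 1) (b : α) : p b ≤ 1 :=
  h1 ▸ Finset.single_le_sum (fun c _ => h0 c) (Finset.mem_univ b)

lemma sum_jp_eq_one (π : ∀ j : Fin m, ℕ → S → A j → ℝ) (h : ℕ) (s : S)
    (hπ : ∀ j, ∑ b, π j h s b = 1) : ∑ a, jp π h s a = 1 := by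
  unfold jp
  rw [← Fintype.piFinset_univ, ← Finset.prod_univ_sum]
  simp [hπ]

lemma sum_jp_ind (π : ∀ j : Fin m, ℕ → S → A j → ℝ) (τ : ∀ i : Fin m, ℕ → S → A i)
    (i : Fin m) (h : ℕ) (s : S) (hπ : ∀ j, ∑ b, π j h s b = 1) :
    ∑ a : ∀ j, A j, jp π h s a * (if a i = τ i h s then (1 : ℝ) else 0)
      = π i h s (τ i h s) := by
  set g : ∀ j : Fin m, A j → ℝ :=
    fun j b => π j h s b * if b = tgtJ τ h s j then 1 else if j = i then 0 else 1 with hg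
  have key : ∀ a : ∀ j, A j, jp π h s a * (if a i = τ i h s then (1 : ℝ) else 0)
      = ∏ j, g j (a j) := by
    intro a
    simp only [hg]
    rw [Finset.prod_mul_distrib]
    unfold jp
    congr 1
    by_cases hai : a i = τ i h s
    · rw [if_pos hai, eq_comm, Finset.prod_eq_one]
      intro j _
      by_cases h1 : a j = tgtJ τ h s j
      · simp [h1]
      · have hji : j ≠ i := by rintro rfl; exact h1 hai
        simp [h1, hji]
    · rw [if_neg hai, eq_comm]
      apply Finset.prod_eq_zero (Finset.mem_univ i)
      have hne : ¬(a i = tgtJ τ h s i) := hai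
      simp [hne]
  simp only [key]
  rw [← Fintype.piFinset_univ, ← Finset.prod_univ_sum]
  rw [Fintype.prod_eq_single i (fun j hj => by
    have hb : ∀ b : A j, g j b = π j h s b := by
      intro b; by_cases hbe : b = tgtJ τ h s j <;> simp [hg, hbe, hj]
    simp only [hb]; exact hπ j)]
  have hb : ∀ b : A i, g i b = if b = τ i h s then π i h s b else 0 := by
    intro b; by_cases hbe : b = τ i h s <;> simp [hg, hbe, tgtJ]
  simp only [hb]
  simp

end Helpers
end MGAttack
namespace MGAttack
section Core
set_option linter.unusedSectionVars false

variable {S : Type} [Fintype S] [DecidableEq S]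
variable {m : ℕ} {A : Fin m → Type} [∀ i, Fintype (A i)] [∀ i, DecidableEq (A i)]

lemma SSum_sub (Ps : ℕ → S → S → ℝ) (f g : ℕ → S → ℝ) :
    ∀ n h s, SSum Ps (fun h s => f h s - g h s) n h s
      = SSum Ps f n h s - SSum Ps g n h s := by
  intro n
  induction n with
  | zero => intro h s; simp [SSum]
  | succ n ih =>
    intro h s
    simp only [SSum, ih, mul_sub, Finset.sum_sub_distrib]
    ring

lemma SSum_nonneg (Ps : ℕ → S → S → ℝ) (f : ℕ → S → ℝ) :
    ∀ n h, (∀ k, k < n → (∀ s s', 0 ≤ Ps (h + k) s s') ∧ ∀ s, 0 ≤ f (h + k) s) →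
      ∀ s, 0 ≤ SSum Ps f n h s := by
  intro n
  induction n with
  | zero => intro h _ s; simp [SSum]
  | succ n ih =>
    intro h hc s
    have h0 := hc 0 (Nat.succ_pos n)
    simp only [SSum]
    have hrec : ∀ s' : S, (0:ℝ) ≤ Ps h s s' * SSum Ps f n (h + 1) s' := by
      intro s'
      have := ih (h + 1) (fun k hk => by
        have := hc (k + 1) (by omega)
        simpa [Nat.add_assoc, Nat.add_comm 1 k] using this) s'
      have hp : 0 ≤ Ps h s s' := by simpa using h0.1 s s'
      positivity
    have hsum : (0:ℝ) ≤ ∑ s', Ps h s s' * SSum Ps f n (h + 1) s' :=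
      Finset.sum_nonneg (fun s' _ => hrec s')
    have hf : 0 ≤ f h s := by simpa using h0.2 s
    linarith

lemma SSum_le (Ps : ℕ → S → S → ℝ) (f g : ℕ → S → ℝ) :
    ∀ n h, (∀ k, k < n → (∀ s s', 0 ≤ Ps (h + k) s s') ∧ ∀ s, f (h + k) s ≤ g (h + k) s) →
      ∀ s, SSum Ps f n h s ≤ SSum Ps g n h s := by
  intro n
  induction n with
  | zero => intro h _ s; simp [SSum]
  | succ n ih =>
    intro h hc s
    have h0 := hc 0 (Nat.succ_pos n)
    simp only [SSum]
    have hrec : ∀ s' ∈ Finset.univ, Ps h s s' * SSum Ps f n (h + 1) s'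
        ≤ Ps h s s' * SSum Ps g n (h + 1) s' := by
      intro s' _
      refine mul_le_mul_of_nonneg_left ?_ (by simpa using h0.1 s s')
      exact ih (h + 1) (fun k hk => by
        have := hc (k + 1) (by omega)
        simpa [Nat.add_assoc, Nat.add_comm 1 k] using this) s'
    have := Finset.sum_le_sum hrec
    have hf : f h s ≤ g h s := by simpa using h0.2 s
    linarith

lemma reach_nonneg (P : ℕ → S → (∀ i, A i) → S → ℝ) (τ : ∀ i : Fin m, ℕ → S → A i) :
    ∀ k h, (∀ j, j < k → ∀ s s', 0 ≤ P (h + j) s (tgtJ τ (h + j) s) s') →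
      ∀ s t, 0 ≤ reach (Pmix P τ) τ k h s t := by
  intro k
  induction k with
  | zero => intro h _ s t; simp only [reach]; split <;> norm_num
  | succ k ih =>
    intro h hc s t
    simp only [reach]
    refine Finset.sum_nonneg (fun u _ => mul_nonneg ?_ ?_)
    · exact (by simpa using hc 0 (Nat.succ_pos k) s u : (0:ℝ) ≤ P h s (tgtJ τ h s) u)
    · exact ih (h + 1) (fun j hj => by
        have := hc (j + 1) (by omega)
        simpa [Nat.add_assoc, Nat.add_comm 1 j] using this) u t

lemma SSum_ge_reach (P : ℕ → S → (∀ i, A i) → S → ℝ) (τ : ∀ i : Fin m, ℕ → S → A i)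
    (f : ℕ → S → ℝ) :
    ∀ k n, k < n → ∀ h,
      (∀ j, j < n → ∀ s s', 0 ≤ P (h + j) s (tgtJ τ (h + j) s) s') →
      (∀ j, j < n → ∀ s, 0 ≤ f (h + j) s) →
      ∀ s t, reach (Pmix P τ) τ k h s t * f (h + k) t
        ≤ SSum (fun h' s s' => P h' s (tgtJ τ h' s) s') f n h s := by
  intro k
  induction k with
  | zero =>
    intro n hn h hP hf s t
    obtain ⟨n', rfl⟩ : ∃ n', n = n' + 1 := ⟨n - 1, by omega⟩
    simp only [reach, SSum]
    by_cases hts : t = s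
    · subst hts
      rw [if_pos rfl, one_mul]
      have hrest : (0:ℝ) ≤ ∑ s', P h t (tgtJ τ h t) s'
          * SSum (fun h' s s' => P h' s (tgtJ τ h' s) s') f n' (h + 1) s' := by
        refine Finset.sum_nonneg (fun s' _ => mul_nonneg ?_ ?_)
        · simpa using hP 0 (by omega) t s'
        · exact SSum_nonneg (fun h' s s' => P h' s (tgtJ τ h' s) s') f n' (h + 1)
            (fun j hj => ⟨fun u u' => by
              have := hP (j + 1) (by omega) u u'
              simpa [Nat.add_assoc, Nat.add_comm 1 j] using this,
            fun u => by
              have := hf (j + 1) (by omega) u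
              simpa [Nat.add_assoc, Nat.add_comm 1 j] using this⟩) s'
      have hf0 := hf 0 (by omega) t
      simp only [Nat.add_zero] at hf0 ⊢
      linarith
    · rw [if_neg hts, zero_mul]
      exact SSum_nonneg (fun h' s s' => P h' s (tgtJ τ h' s) s') f (n' + 1) h
        (fun j hj => ⟨hP j (by omega), hf j (by omega)⟩) s
  | succ k ih =>
    intro n hn h hP hf s t
    obtain ⟨n', rfl⟩ : ∃ n', n = n' + 1 := ⟨n - 1, by omega⟩
    simp only [reach, SSum]
    have hstep : (∑ u, P h s (tgtJ τ h s) u * reach (Pmix P τ) τ k (h + 1) u t)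
        * f (h + (k + 1)) t
        ≤ ∑ s', P h s (tgtJ τ h s) s'
          * SSum (fun h' s s' => P h' s (tgtJ τ h' s) s') f n' (h + 1) s' := by
      rw [Finset.sum_mul]
      refine Finset.sum_le_sum (fun u _ => ?_)
      rw [mul_assoc]
      refine mul_le_mul_of_nonneg_left ?_ (by simpa using hP 0 (by omega) s u)
      have heq : h + (k + 1) = (h + 1) + k := by omega
      rw [heq]
      exact ih n' (by omega) (h + 1) (fun j hj u' u'' => by
          have := hP (j + 1) (by omega) u' u''
          simpa [Nat.add_assoc, Nat.add_comm 1 j] using this)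
        (fun j hj u' => by
          have := hf (j + 1) (by omega) u'
          simpa [Nat.add_assoc, Nat.add_comm 1 j] using this) u t
    have hf0 : 0 ≤ f h s := by simpa using hf 0 (by omega) s
    simp only [Pmix] at hstep ⊢
    linarith [hstep]

end Core
end MGAttack
namespace MGAttack
section VAlem
set_option linter.unusedSectionVars false

variable {S : Type} [Fintype S] [DecidableEq S]
variable {m : ℕ} {A : Fin m → Type} [∀ i, Fintype (A i)] [∀ i, DecidableEq (A i)]

lemma VA_eq_SSum (P : ℕ → S → (∀ i, A i) → S → ℝ) (R : Fin m → ℕ → S → (∀ i, A i) → ℝ)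
    (τ : ∀ i : Fin m, ℕ → S → A i) (i : Fin m) (π : ∀ j : Fin m, ℕ → S → A j → ℝ) :
    ∀ n h, (∀ j : Fin m, ∀ k, k < n → ∀ s, ∑ b, π j (h + k) s b = 1) → ∀ s,
      VA (Pmix P τ) (Rmix R τ i) (jp π) n h s
        = SSum (fun h' s s' => P h' s (tgtJ τ h' s) s')
            (fun h' s => π i h' s (τ i h' s) * R i h' s (tgtJ τ h' s)) n h s := by
  intro n
  induction n with
  | zero => intro h _ s; rfl
  | succ n ih =>
    intro h hπ s
    have hπ0 : ∀ j, ∑ b, π j h s b = 1 := fun j => by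
      simpa using hπ j 0 (Nat.succ_pos n) s
    have ih' : ∀ s', VA (Pmix P τ) (Rmix R τ i) (jp π) n (h + 1) s'
        = SSum (fun h' s s' => P h' s (tgtJ τ h' s) s')
            (fun h' s => π i h' s (τ i h' s) * R i h' s (tgtJ τ h' s)) n (h + 1) s' :=
      ih (h + 1) (fun j k hk s => by
        have := hπ j (k + 1) (by omega) s
        simpa [Nat.add_assoc, Nat.add_comm 1 k] using this)
    set K : ℝ := ∑ s', P h s (tgtJ τ h s) s'
      * SSum (fun h' s s' => P h' s (tgtJ τ h' s) s')
          (fun h' s => π i h' s (τ i h' s) * R i h' s (tgtJ τ h' s)) n (h + 1) s' with hK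
    have hC : ∀ a : ∀ j, A j,
        (∑ s', Pmix P τ h s a s' * VA (Pmix P τ) (Rmix R τ i) (jp π) n (h + 1) s') = K := by
      intro a
      rw [hK]
      refine Finset.sum_congr rfl (fun s' _ => ?_)
      rw [ih' s']
      rfl
    show (∑ a, jp π h s a * (Rmix R τ i h s a
        + ∑ s', Pmix P τ h s a s' * VA (Pmix P τ) (Rmix R τ i) (jp π) n (h + 1) s'))
      = π i h s (τ i h s) * R i h s (tgtJ τ h s) + K
    calc ∑ a, jp π h s a * (Rmix R τ i h s a
          + ∑ s', Pmix P τ h s a s' * VA (Pmix P τ) (Rmix R τ i) (jp π) n (h + 1) s')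
        = ∑ a, (jp π h s a * Rmix R τ i h s a + jp π h s a * K) := by
          refine Finset.sum_congr rfl (fun a _ => ?_)
          rw [hC a, mul_add]
      _ = (∑ a, jp π h s a * Rmix R τ i h s a) + (∑ a, jp π h s a) * K := by
          rw [Finset.sum_add_distrib, Finset.sum_mul]
      _ = π i h s (τ i h s) * R i h s (tgtJ τ h s) + K := by
          rw [sum_jp_eq_one π h s hπ0, one_mul]
          congr 1
          have : ∀ a : ∀ j, A j, jp π h s a * Rmix R τ i h s a
              = (jp π h s a * (if a i = τ i h s then (1:ℝ) else 0)) * R i h s (tgtJ τ h s) := by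
            intro a; simp only [Rmix]; ring
          simp only [this]
          rw [← Finset.sum_mul, sum_jp_ind π τ i h s hπ0]

end VAlem
end MGAttack

namespace MGAttack

/-- Under the mixed attack with `R_{i,h}(s, π†_h(s)) > 0` everywhere: (i) for every agent
`i` and every product policy of the others, `π†_i` is a best response in the post-attack
game; (ii) `π†` is a Nash equilibrium of the post-attack game; (iii) if every state is
reachable at every step under `π†`, then any Nash equilibrium product policy of the
post-attack game agrees with `π†` at every state and step, i.e. `π†` is the unique Nash
equilibrium. -/
theorem stmt14 {S : Type} [Fintype S] [DecidableEq S]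
    {m : ℕ} {A : Fin m → Type} [∀ i, Fintype (A i)] [∀ i, DecidableEq (A i)]
    (H : ℕ) (hH : 1 ≤ H) (hm : 1 ≤ m)
    (P : ℕ → S → (∀ i, A i) → S → ℝ) (hP : IsKernel H P)
    (R : Fin m → ℕ → S → (∀ i, A i) → ℝ) (hR : IsReward H R)
    (τ : ∀ i : Fin m, ℕ → S → A i)
    (hpos : ∀ i : Fin m, ∀ h ∈ Finset.Icc 1 H, ∀ s : S, 0 < R i h s (tgtJ τ h s)) :
    -- (i) best response toward any product policy of the other agents
    (∀ π : ∀ j : Fin m, ℕ → S → A j → ℝ, IsPolicy H π →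
      ∀ i : Fin m, ∀ πi : ℕ → S → A i → ℝ, IsPolicyI H πi → ∀ s : S,
        Vf (Pmix P τ) (Rmix R τ i) (jp (Function.update π i πi)) H 1 s
          ≤ Vf (Pmix P τ) (Rmix R τ i) (jp (Function.update π i (detP τ i))) H 1 s)
    -- (ii) `π†` is a Nash equilibrium
    ∧ (∀ i : Fin m, ∀ πi : ℕ → S → A i → ℝ, IsPolicyI H πi → ∀ s : S,
        Vf (Pmix P τ) (Rmix R τ i) (jp (Function.update (detP τ) i πi)) H 1 s
          ≤ Vf (Pmix P τ) (Rmix R τ i) (jp (detP τ)) H 1 s)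
    -- (iii) uniqueness under reachability
    ∧ ((∀ h ∈ Finset.Icc 1 H, ∀ s : S, ∃ s₁ : S, 0 < reach (Pmix P τ) τ (h - 1) 1 s₁ s) →
        ∀ π : ∀ j : Fin m, ℕ → S → A j → ℝ, IsPolicy H π →
          (∀ i : Fin m, ∀ πi : ℕ → S → A i → ℝ, IsPolicyI H πi → ∀ s : S,
            Vf (Pmix P τ) (Rmix R τ i) (jp (Function.update π i πi)) H 1 s
              ≤ Vf (Pmix P τ) (Rmix R τ i) (jp π) H 1 s) →
          ∀ i : Fin m, ∀ h ∈ Finset.Icc 1 H, ∀ s : S, π i h s (τ i h s) = 1) := by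
  -- abbreviations
  have hdetI : ∀ i : Fin m, ∀ h s, (∀ b, (0:ℝ) ≤ detP τ i h s b) ∧ ∑ b, detP τ i h s b = 1 := by
    intro i h s
    constructor
    · intro b; simp only [detP]; split <;> norm_num
    · simp [detP]
  have hdetPI : ∀ i : Fin m, IsPolicyI H (detP τ i) := fun i h _ s => hdetI i h s
  have hdetPol : IsPolicy H (detP τ) := fun i h _ s => hdetI i h s
  have hup : ∀ (π : ∀ j : Fin m, ℕ → S → A j → ℝ), IsPolicy H π →
      ∀ (i : Fin m) (πi : ℕ → S → A i → ℝ), IsPolicyI H πi →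
      IsPolicy H (Function.update π i πi) := by
    intro π hπ i πi hπi j h hh s
    by_cases hj : j = i
    · subst hj; rw [Function.update_self]; exact hπi h hh s
    · rw [Function.update_of_ne hj]; exact hπ j h hh s
  have hPs : ∀ k, k < H → ∀ s s', (0:ℝ) ≤ P (1 + k) s (tgtJ τ (1 + k) s) s' := by
    intro k hk s s'
    exact (hP (1 + k) (Finset.mem_Icc.mpr ⟨by omega, by omega⟩) s (tgtJ τ (1 + k) s)).1 s'
  have hRt0 : ∀ i : Fin m, ∀ h, 1 ≤ h → h ≤ H → ∀ s, (0:ℝ) ≤ R i h s (tgtJ τ h s) := by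
    intro i h h1 h2 s
    exact (hR i h (Finset.mem_Icc.mpr ⟨h1, h2⟩) s (tgtJ τ h s)).1
  have main : ∀ (ρ : ∀ j : Fin m, ℕ → S → A j → ℝ), IsPolicy H ρ → ∀ (i : Fin m) (s : S),
      Vf (Pmix P τ) (Rmix R τ i) (jp ρ) H 1 s
        = SSum (fun h' s s' => P h' s (tgtJ τ h' s) s')
            (fun h' s => ρ i h' s (τ i h' s) * R i h' s (tgtJ τ h' s)) H 1 s := by
    intro ρ hρ i s
    have : H + 1 - 1 = H := by omega
    simp only [Vf, this]
    exact VA_eq_SSum P R τ i ρ H 1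
      (fun j k hk s => (hρ j (1 + k) (Finset.mem_Icc.mpr ⟨by omega, by omega⟩) s).2) s
  -- the generic best-response inequality
  have partI : ∀ π : ∀ j : Fin m, ℕ → S → A j → ℝ, IsPolicy H π →
      ∀ i : Fin m, ∀ πi : ℕ → S → A i → ℝ, IsPolicyI H πi → ∀ s : S,
        Vf (Pmix P τ) (Rmix R τ i) (jp (Function.update π i πi)) H 1 s
          ≤ Vf (Pmix P τ) (Rmix R τ i) (jp (Function.update π i (detP τ i))) H 1 s := by
    intro π hπ i πi hπi s
    rw [main (Function.update π i πi) (hup π hπ i πi hπi) i s,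
      main (Function.update π i (detP τ i)) (hup π hπ i (detP τ i) (hdetPI i)) i s]
    simp only [Function.update_self]
    refine SSum_le _ _ _ H 1 (fun k hk => ⟨fun s s' => hPs k hk s s', fun s => ?_⟩) s
    have h1k : 1 + k ∈ Finset.Icc 1 H := Finset.mem_Icc.mpr ⟨by omega, by omega⟩
    have hle1 : πi (1 + k) s (τ i (1 + k) s) ≤ 1 :=
      prob_le_one _ (hπi (1 + k) h1k s).1 (hπi (1 + k) h1k s).2 _
    have hd1 : detP τ i (1 + k) s (τ i (1 + k) s) = 1 := by simp [detP]
    rw [hd1, one_mul]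
    have h0 : (0:ℝ) ≤ πi (1 + k) s (τ i (1 + k) s) := (hπi (1 + k) h1k s).1 _
    nlinarith [hRt0 i (1 + k) (by omega) (by omega) s]
  refine ⟨partI, ?_, ?_⟩
  · -- (ii)
    intro i πi hπi s
    have := partI (detP τ) hdetPol i πi hπi s
    rwa [Function.update_eq_self] at this
  · -- (iii)
    intro hre π hπ hNE i h hh s
    obtain ⟨s₁, hs₁⟩ := hre h hh s
    have hh' := Finset.mem_Icc.mp hh
    have e1 := main π hπ i s₁
    have e2 := main (Function.update π i (detP τ i)) (hup π hπ i (detP τ i) (hdetPI i)) i s₁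
    simp only [Function.update_self] at e2
    have hNE1 := hNE i (detP τ i) (hdetPI i) s₁
    rw [e1, e2] at hNE1
    -- also the reverse inequality
    have hle : SSum (fun h' s s' => P h' s (tgtJ τ h' s) s')
        (fun h' s => π i h' s (τ i h' s) * R i h' s (tgtJ τ h' s)) H 1 s₁
        ≤ SSum (fun h' s s' => P h' s (tgtJ τ h' s) s')
          (fun h' s => detP τ i h' s (τ i h' s) * R i h' s (tgtJ τ h' s)) H 1 s₁ := by
      refine SSum_le _ _ _ H 1 (fun k hk => ⟨fun s s' => hPs k hk s s', fun s => ?_⟩) s₁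
      have h1k : 1 + k ∈ Finset.Icc 1 H := Finset.mem_Icc.mpr ⟨by omega, by omega⟩
      have hle1 : π i (1 + k) s (τ i (1 + k) s) ≤ 1 :=
        prob_le_one _ (hπ i (1 + k) h1k s).1 (hπ i (1 + k) h1k s).2 _
      have hd1 : detP τ i (1 + k) s (τ i (1 + k) s) = 1 := by simp [detP]
      rw [hd1, one_mul]
      have h0 : (0:ℝ) ≤ π i (1 + k) s (τ i (1 + k) s) := (hπ i (1 + k) h1k s).1 _
      nlinarith [hRt0 i (1 + k) (by omega) (by omega) s]
    set d : ℕ → S → ℝ := fun h' s =>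
      detP τ i h' s (τ i h' s) * R i h' s (tgtJ τ h' s)
        - π i h' s (τ i h' s) * R i h' s (tgtJ τ h' s) with hd
    have hdzero : SSum (fun h' s s' => P h' s (tgtJ τ h' s) s') d H 1 s₁ = 0 := by
      rw [hd, SSum_sub]
      linarith
    have hdnn : ∀ j, j < H → ∀ s, (0:ℝ) ≤ d (1 + j) s := by
      intro k hk s
      have h1k : 1 + k ∈ Finset.Icc 1 H := Finset.mem_Icc.mpr ⟨by omega, by omega⟩
      have hle1 : π i (1 + k) s (τ i (1 + k) s) ≤ 1 :=
        prob_le_one _ (hπ i (1 + k) h1k s).1 (hπ i (1 + k) h1k s).2 _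
      have hd1 : detP τ i (1 + k) s (τ i (1 + k) s) = 1 := by simp [detP]
      simp only [hd, hd1, one_mul]
      nlinarith [hRt0 i (1 + k) (by omega) (by omega) s]
    have hgr := SSum_ge_reach P τ d (h - 1) H (by omega) 1
      (fun j hj s s' => hPs j hj s s') hdnn s₁ s
    rw [hdzero] at hgr
    have hidx : 1 + (h - 1) = h := by omega
    rw [hidx] at hgr
    have hdnn' : (0:ℝ) ≤ d h s := by
      have := hdnn (h - 1) (by omega) s
      rwa [hidx] at this
    have hdhs : d h s = 0 := by nlinarith
    have hd1 : detP τ i h s (τ i h s) = 1 := by simp [detP]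
    simp only [hd, hd1, one_mul] at hdhs
    have hfac : (1 - π i h s (τ i h s)) * R i h s (tgtJ τ h s) = 0 := by ring_nf; linarith [hdhs]
    rcases mul_eq_zero.mp hfac with h1 | h2
    · linarith
    · exact absurd h2 (ne_of_gt (hpos i h hh s))

end MGAttack
end
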